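/- arXiv:1108.1100 — 5 statements merged into one kernel-verified Lean document; each statement's English description precedes it below -/
import Mathlib

section
/- Let X be a bicomplex of R-modules with exact rows and columns (i.e. H'(X) = 0 and H''(X) = 0). Then for every (i,j) ∈ ℤ×ℤ, the image d'(Z''(X)^{(i-1,j)}) and the image d''(Z'(X)^{(i,j-1)}) are equal as submodules of X^{(i,j)}. -/
-- The conclusion at `(i, j)` is the claim of the informal statement at position `(i + 1, j + 1)`.
theorem stmt0_general {R : Type*} [Ring R] (X : ℤ → ℤ → Type*)
    [∀ i j, AddCommGroup (X i j)] [∀ i j, Module R (X i j)]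
    (d₁ : ∀ i j, X i j →ₗ[R] X (i + 1) j)
    (d₂ : ∀ i j, X i j →ₗ[R] X i (j + 1))
    (hcomm : ∀ i j, (d₂ (i + 1) j).comp (d₁ i j) = (d₁ i (j + 1)).comp (d₂ i j))
    (hexact₁ : ∀ i j, LinearMap.ker (d₁ (i + 1) j) = LinearMap.range (d₁ i j))
    (hexact₂ : ∀ i j, LinearMap.ker (d₂ i (j + 1)) = LinearMap.range (d₂ i j)) :
    ∀ i j : ℤ,
      Submodule.map (d₁ i (j + 1)) (LinearMap.ker (d₂ i (j + 1))) =
        Submodule.map (d₂ (i + 1) j) (LinearMap.ker (d₁ (i + 1) j)) := by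
  intro i j
  -- By exactness both sides are the image of `X i j` under the diagonal `d₁ d₂ = d₂ d₁`.
  rw [hexact₂ i j, hexact₁ i j, ← LinearMap.range_comp, ← LinearMap.range_comp, hcomm i j]

/-- Let `X` be a bicomplex of `R`-modules (horizontal differential
`d₁` of bidegree `(1,0)`, vertical differential `d₂` of bidegree `(0,1)`, squaring to
zero and commuting) with exact rows and columns (`H'(X) = H''(X) = 0`).  Then at every
position the image `d'(Z''(X))` equals the image `d''(Z'(X))` as submodules.
(Positions are shifted: the conclusion at `(i, j)` below is the assertion of the
statement at position `(i+1, j+1)`, which covers all of `ℤ × ℤ`.) -/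
theorem stmt0 {R : Type*} [Ring R] (X : ℤ → ℤ → Type*)
    [∀ i j, AddCommGroup (X i j)] [∀ i j, Module R (X i j)]
    (d₁ : ∀ i j, X i j →ₗ[R] X (i + 1) j)
    (d₂ : ∀ i j, X i j →ₗ[R] X i (j + 1))
    (hd₁ : ∀ i j, (d₁ (i + 1) j).comp (d₁ i j) = 0)
    (hd₂ : ∀ i j, (d₂ i (j + 1)).comp (d₂ i j) = 0)
    (hcomm : ∀ i j, (d₂ (i + 1) j).comp (d₁ i j) = (d₁ i (j + 1)).comp (d₂ i j))
    (hexact₁ : ∀ i j, LinearMap.ker (d₁ (i + 1) j) = LinearMap.range (d₁ i j))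
    (hexact₂ : ∀ i j, LinearMap.ker (d₂ i (j + 1)) = LinearMap.range (d₂ i j)) :
    ∀ i j : ℤ,
      Submodule.map (d₁ i (j + 1)) (LinearMap.ker (d₂ i (j + 1))) =
        Submodule.map (d₂ (i + 1) j) (LinearMap.ker (d₁ (i + 1) j)) :=
  stmt0_general X d₁ d₂ hcomm hexact₁ hexact₂
end

section
/- Let X be a bicomplex of R-modules with exact rows and columns (H'(X) = H''(X) = 0). Then the homology of the complex (Z''(X), d') at position (i,j) is isomorphic to the homology of the complex (Z'(X), d'') at position (i,j), both being isomorphic to (Z'(X)^{(i,j)} ∩ Z''(X)^{(i,j)}) / d'(Z''(X)^{(i-1,j)}) = (Z'(X)^{(i,j)} ∩ Z''(X)^{(i,j)}) / d''(Z'(X)^{(i,j-1)}). (First part of Theorem 2.1: H'(Z''(X)) = H''(Z'(X)).) -/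
/-! Both homologies are subquotients of `Z' ⊓ Z''`: the cycles of `Z''` under `d'` are
`Z' ⊓ Z''`, and so are the cycles of `Z'` under `d''`. The two boundary modules
`d'(Z'')` and `d''(Z')` agree because exactness turns each kernel into the image of the
previous differential, so both are the image of `d' ∘ d'' = d'' ∘ d'`. -/

/-- The homology of a three-term sequence `M →f→ N →g→ P` at `N`:
`ker g` modulo (the pullback to `ker g` of) `range f`. -/
abbrev homologyOf {R M N P : Type*} [Ring R] [AddCommGroup M] [Module R M]
    [AddCommGroup N] [Module R N] [AddCommGroup P] [Module R P]
    (f : M →ₗ[R] N) (g : N →ₗ[R] P) : Type _ :=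
  ↥(LinearMap.ker g) ⧸
    Submodule.comap (LinearMap.ker g).subtype (LinearMap.range f)

open Submodule LinearMap

theorem LinearMap.map_ker_eq_map_ker_of_exact {R A B C D E F : Type*} [Semiring R]
    [AddCommMonoid A] [Module R A] [AddCommMonoid B] [Module R B]
    [AddCommMonoid C] [Module R C] [AddCommMonoid D] [Module R D]
    [AddCommMonoid E] [Module R E] [AddCommMonoid F] [Module R F]
    {u : A →ₗ[R] B} {v : A →ₗ[R] C} {u' : C →ₗ[R] D} {v' : B →ₗ[R] D}
    {s : B →ₗ[R] E} {s' : C →ₗ[R] F}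
    (hcomm : v'.comp u = u'.comp v) (hs : ker s = range u) (hs' : ker s' = range v) :
    map u' (ker s') = map v' (ker s) := by
  rw [hs, hs', ← range_comp, ← range_comp, hcomm]

section

variable {R M : Type*} [Ring R] [AddCommGroup M] [Module R M]

def Submodule.subquotientComapSubtypeEquiv {q t : Submodule R M} (htq : t ≤ q)
    (N : Submodule R M) :
    (↥(t.comap q.subtype) ⧸ (N.comap q.subtype).comap (t.comap q.subtype).subtype) ≃ₗ[R]
      ↥t ⧸ N.comap t.subtype :=
  Quotient.equiv _ _ (comapSubtypeEquivOfLe htq) <| by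
    ext ⟨x, hx⟩
    constructor
    · rintro ⟨y, hy, hyx⟩
      rw [← hyx]
      exact hy
    · intro hxN
      exact ⟨⟨⟨x, htq hx⟩, hx⟩, hxN, rfl⟩

theorem LinearMap.nonempty_homologyOf_equiv_subquotient
    {X₁ X₂ X₃ : Type*} [AddCommGroup X₁] [Module R X₁]
    [AddCommGroup X₂] [Module R X₂] [AddCommGroup X₃] [Module R X₃]
    {p : Submodule R X₁} {q : Submodule R X₂} {r : Submodule R X₃}
    {g₁ : X₁ →ₗ[R] X₂} {g₂ : X₂ →ₗ[R] X₃} (e₁ : p →ₗ[R] q) (e₂ : q →ₗ[R] r)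
    (he₁ : ∀ x : p, (e₁ x : X₂) = g₁ x) (he₂ : ∀ x : q, (e₂ x : X₃) = g₂ x)
    {t : Submodule R X₂} (ht : ker g₂ ⊓ q = t) :
    Nonempty (homologyOf e₁ e₂ ≃ₗ[R] ↥t ⧸ (map g₁ p).comap t.subtype) := by
  subst ht
  have hker : ker e₂ = (ker g₂ ⊓ q).comap q.subtype := by
    ext x
    simp [← Subtype.coe_inj, he₂]
  have hrange : range e₁ = (map g₁ p).comap q.subtype := by
    ext x
    simp [← Subtype.coe_inj, he₁]
  unfold homologyOf
  rw [hker, hrange]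
  exact ⟨subquotientComapSubtypeEquiv inf_le_right _⟩

end

theorem stmt2_general {R : Type*} [Ring R] (X : ℤ → ℤ → Type*)
    [∀ i j, AddCommGroup (X i j)] [∀ i j, Module R (X i j)]
    (d₁ : ∀ i j, X i j →ₗ[R] X (i + 1) j)
    (d₂ : ∀ i j, X i j →ₗ[R] X i (j + 1))
    (hcomm : ∀ i j, (d₂ (i + 1) j).comp (d₁ i j) = (d₁ i (j + 1)).comp (d₂ i j))
    (hexact₁ : ∀ i j, LinearMap.ker (d₁ (i + 1) j) = LinearMap.range (d₁ i j))
    (hexact₂ : ∀ i j, LinearMap.ker (d₂ i (j + 1)) = LinearMap.range (d₂ i j))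
    -- `e` is the differential of the complex `Z''(X)`, induced by `d₁`
    (e : ∀ i j, ↥(LinearMap.ker (d₂ i j)) →ₗ[R] ↥(LinearMap.ker (d₂ (i + 1) j)))
    (he : ∀ i j (x : ↥(LinearMap.ker (d₂ i j))),
      (e i j x : X (i + 1) j) = d₁ i j (x : X i j))
    -- `f` is the differential of the complex `Z'(X)`, induced by `d₂`
    (f : ∀ i j, ↥(LinearMap.ker (d₁ i j)) →ₗ[R] ↥(LinearMap.ker (d₁ i (j + 1))))
    (hf : ∀ i j (x : ↥(LinearMap.ker (d₁ i j))),
      (f i j x : X i (j + 1)) = d₂ i j (x : X i j)) :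
    ∀ i j : ℤ,
      Submodule.map (d₁ i (j + 1)) (LinearMap.ker (d₂ i (j + 1))) =
        Submodule.map (d₂ (i + 1) j) (LinearMap.ker (d₁ (i + 1) j)) ∧
      Nonempty (homologyOf (e i (j + 1)) (e (i + 1) (j + 1)) ≃ₗ[R]
        (↥(LinearMap.ker (d₁ (i + 1) (j + 1)) ⊓ LinearMap.ker (d₂ (i + 1) (j + 1))) ⧸
          Submodule.comap
            (LinearMap.ker (d₁ (i + 1) (j + 1)) ⊓
              LinearMap.ker (d₂ (i + 1) (j + 1))).subtype
            (Submodule.map (d₁ i (j + 1)) (LinearMap.ker (d₂ i (j + 1)))))) ∧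
      Nonempty (homologyOf (f (i + 1) j) (f (i + 1) (j + 1)) ≃ₗ[R]
        (↥(LinearMap.ker (d₁ (i + 1) (j + 1)) ⊓ LinearMap.ker (d₂ (i + 1) (j + 1))) ⧸
          Submodule.comap
            (LinearMap.ker (d₁ (i + 1) (j + 1)) ⊓
              LinearMap.ker (d₂ (i + 1) (j + 1))).subtype
            (Submodule.map (d₂ (i + 1) j) (LinearMap.ker (d₁ (i + 1) j))))) ∧
      Nonempty (homologyOf (e i (j + 1)) (e (i + 1) (j + 1)) ≃ₗ[R]
        homologyOf (f (i + 1) j) (f (i + 1) (j + 1))) := by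
  intro i j
  have hboundary := map_ker_eq_map_ker_of_exact (hcomm i j) (hexact₁ i j) (hexact₂ i j)
  obtain ⟨φ⟩ := nonempty_homologyOf_equiv_subquotient _ _ (he i (j + 1)) (he (i + 1) (j + 1)) rfl
  obtain ⟨ψ⟩ := nonempty_homologyOf_equiv_subquotient _ _ (hf (i + 1) j) (hf (i + 1) (j + 1))
    (inf_comm _ _)
  exact ⟨hboundary, ⟨φ⟩, ⟨ψ⟩, ⟨φ.trans ((quotEquivOfEq _ _ (by rw [hboundary])).trans ψ.symm)⟩⟩

/-- first part of Theorem 2.1.  Let `X` be a bicomplex of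
`R`-modules with exact rows and columns (`H'(X) = H''(X) = 0`); `e` (resp. `f`)
denotes the differential of the complex `Z''(X)` induced by `d₁` (resp. of `Z'(X)`
induced by `d₂`).  Then at every position `(i+1, j+1)`: the boundary submodules
`d'(Z''(X))` and `d''(Z'(X))` coincide, the homology of `(Z''(X), d')` is
isomorphic to `(Z'(X) ⊓ Z''(X)) / d'(Z''(X))`, the homology of `(Z'(X), d'')` is
isomorphic to `(Z'(X) ⊓ Z''(X)) / d''(Z'(X))`, and consequently
`H'(Z''(X)) ≅ H''(Z'(X))`. -/
theorem stmt2 {R : Type*} [Ring R] (X : ℤ → ℤ → Type*)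
    [∀ i j, AddCommGroup (X i j)] [∀ i j, Module R (X i j)]
    (d₁ : ∀ i j, X i j →ₗ[R] X (i + 1) j)
    (d₂ : ∀ i j, X i j →ₗ[R] X i (j + 1))
    (hd₁ : ∀ i j, (d₁ (i + 1) j).comp (d₁ i j) = 0)
    (hd₂ : ∀ i j, (d₂ i (j + 1)).comp (d₂ i j) = 0)
    (hcomm : ∀ i j, (d₂ (i + 1) j).comp (d₁ i j) = (d₁ i (j + 1)).comp (d₂ i j))
    (hexact₁ : ∀ i j, LinearMap.ker (d₁ (i + 1) j) = LinearMap.range (d₁ i j))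
    (hexact₂ : ∀ i j, LinearMap.ker (d₂ i (j + 1)) = LinearMap.range (d₂ i j))
    -- `e` is the differential of the complex `Z''(X)`, induced by `d₁`
    (e : ∀ i j, ↥(LinearMap.ker (d₂ i j)) →ₗ[R] ↥(LinearMap.ker (d₂ (i + 1) j)))
    (he : ∀ i j (x : ↥(LinearMap.ker (d₂ i j))),
      (e i j x : X (i + 1) j) = d₁ i j (x : X i j))
    -- `f` is the differential of the complex `Z'(X)`, induced by `d₂`
    (f : ∀ i j, ↥(LinearMap.ker (d₁ i j)) →ₗ[R] ↥(LinearMap.ker (d₁ i (j + 1))))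
    (hf : ∀ i j (x : ↥(LinearMap.ker (d₁ i j))),
      (f i j x : X i (j + 1)) = d₂ i j (x : X i j)) :
    ∀ i j : ℤ,
      Submodule.map (d₁ i (j + 1)) (LinearMap.ker (d₂ i (j + 1))) =
        Submodule.map (d₂ (i + 1) j) (LinearMap.ker (d₁ (i + 1) j)) ∧
      Nonempty (homologyOf (e i (j + 1)) (e (i + 1) (j + 1)) ≃ₗ[R]
        (↥(LinearMap.ker (d₁ (i + 1) (j + 1)) ⊓ LinearMap.ker (d₂ (i + 1) (j + 1))) ⧸
          Submodule.comap
            (LinearMap.ker (d₁ (i + 1) (j + 1)) ⊓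
              LinearMap.ker (d₂ (i + 1) (j + 1))).subtype
            (Submodule.map (d₁ i (j + 1)) (LinearMap.ker (d₂ i (j + 1)))))) ∧
      Nonempty (homologyOf (f (i + 1) j) (f (i + 1) (j + 1)) ≃ₗ[R]
        (↥(LinearMap.ker (d₁ (i + 1) (j + 1)) ⊓ LinearMap.ker (d₂ (i + 1) (j + 1))) ⧸
          Submodule.comap
            (LinearMap.ker (d₁ (i + 1) (j + 1)) ⊓
              LinearMap.ker (d₂ (i + 1) (j + 1))).subtype
            (Submodule.map (d₂ (i + 1) j) (LinearMap.ker (d₁ (i + 1) j))))) ∧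
      Nonempty (homologyOf (e i (j + 1)) (e (i + 1) (j + 1)) ≃ₗ[R]
        homologyOf (f (i + 1) j) (f (i + 1) (j + 1))) :=
  stmt2_general X d₁ d₂ hcomm hexact₁ hexact₂ e he f hf
end

section
/- Let X be a bicomplex of R-modules with exact rows and columns (H'(X) = H''(X) = 0), and for each (i,j) let H(X)^{(i,j)} = (Z'(X)^{(i,j)} ∩ Z''(X)^{(i,j)}) / d'(Z''(X)^{(i-1,j)}). Suppose x ∈ Z'(X)^{(i,j)} ∩ Z''(X)^{(i,j)} and y ∈ X^{(i,j-1)} satisfy d''(y) = x. Then: (a) d'(y) ∈ Z'(X)^{(i+1,j-1)} ∩ Z''(X)^{(i+1,j-1)}; and (b) if x̄ ∈ Z'(X)^{(i,j)} ∩ Z''(X)^{(i,j)} with x̄ − x ∈ d'(Z''(X)^{(i-1,j)}) and ȳ ∈ X^{(i,j-1)} with d''(ȳ) = x̄, then d'(ȳ) − d'(y) ∈ d'(Z''(X)^{(i,j-1)}). Hence the assignment [x] ↦ [d'(y)] gives a well-defined R-linear map H(X)^{(i,j)} → H(X)^{(i+1,j-1)}. -/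
/-!
A diagram chase with `d' ∘ d' = 0`, `d' d'' = d'' d'` and exactness of the columns. On the
elements `v` with `d'' v ∈ Z' ∩ Z''`, the map `v ↦ [d'' v]` is onto `H^{(i,j)}` by exactness, and
`v ↦ [d' v]` kills its kernel: if `d'' v = d' w` with `d'' w = 0`, write `w = d'' t`; then
`v - d' t ∈ Z''` and `d' (v - d' t) = d' v`. So the second map factors through the first.
-/

open LinearMap Submodule

namespace LinearMap

variable {R M A B : Type*} [Ring R] [AddCommGroup M] [AddCommGroup A] [AddCommGroup B]
  [Module R M] [Module R A] [Module R B]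

noncomputable def descOfSurjective (p : M →ₗ[R] A) (hp : Function.Surjective p) (f : M →ₗ[R] B)
    (h : ker p ≤ ker f) : A →ₗ[R] B :=
  (ker p).liftQ f h ∘ₗ (p.quotKerEquivOfSurjective hp).symm.toLinearMap

@[simp]
theorem descOfSurjective_apply (p : M →ₗ[R] A) (hp : Function.Surjective p) (f : M →ₗ[R] B)
    (h : ker p ≤ ker f) (m : M) : descOfSurjective p hp f h (p m) = f m := by
  have hmk : (p.quotKerEquivOfSurjective hp).symm (p m) = (ker p).mkQ m :=
    (LinearEquiv.symm_apply_eq _).mpr rfl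
  simp only [descOfSurjective, coe_comp, LinearEquiv.coe_coe, Function.comp_apply, hmk,
    mkQ_apply, liftQ_apply]

end LinearMap

namespace Bicomplex

variable {R : Type*} [Ring R] {X : ℤ → ℤ → Type*} [∀ i j, AddCommGroup (X i j)]
  [∀ i j, Module R (X i j)]
  (d₁ : ∀ i j, X i j →ₗ[R] X (i + 1) j) (d₂ : ∀ i j, X i j →ₗ[R] X i (j + 1))

abbrev cycles (i j : ℤ) : Submodule R (X i j) := ker (d₁ i j) ⊓ ker (d₂ i j)

abbrev boundaries (i j : ℤ) : Submodule R (X (i + 1) j) := (ker (d₂ i j)).map (d₁ i j)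

/-- `H(X)` at position `(i + 1, j)`. -/
abbrev homology (i j : ℤ) : Type _ :=
  cycles d₁ d₂ (i + 1) j ⧸ (boundaries d₁ d₂ i j).comap (cycles d₁ d₂ (i + 1) j).subtype

abbrev lifts (i j : ℤ) : Submodule R (X i j) := (cycles d₁ d₂ i (j + 1)).comap (d₂ i j)

variable {d₁ d₂} {i j : ℤ}

theorem d₁_mem_cycles (hd₁ : (d₁ (i + 1) j).comp (d₁ i j) = 0)
    (hcomm : (d₂ (i + 1) j).comp (d₁ i j) = (d₁ i (j + 1)).comp (d₂ i j))
    {v : X i j} (hv : d₂ i j v ∈ ker (d₁ i (j + 1))) : d₁ i j v ∈ cycles d₁ d₂ (i + 1) j := by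
  refine ⟨LinearMap.congr_fun hd₁ v, ?_⟩
  rw [SetLike.mem_coe, mem_ker, ← comp_apply, hcomm, comp_apply]
  exact hv

theorem d₁_mem_boundaries (hd₁ : (d₁ (i + 1) j).comp (d₁ i j) = 0)
    (hcomm : (d₂ (i + 1) j).comp (d₁ i j) = (d₁ i (j + 1)).comp (d₂ i j))
    (hexact₂ : ker (d₂ i (j + 1)) ≤ range (d₂ i j))
    {v : X (i + 1) j} (hv : d₂ (i + 1) j v ∈ boundaries d₁ d₂ i (j + 1)) :
    d₁ (i + 1) j v ∈ boundaries d₁ d₂ (i + 1) j := by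
  obtain ⟨w, hw, hwv⟩ := hv
  obtain ⟨t, rfl⟩ := hexact₂ hw
  refine ⟨v - d₁ i j t, ?_, ?_⟩
  · rw [SetLike.mem_coe, mem_ker, map_sub, ← comp_apply (d₂ (i + 1) j), hcomm, comp_apply, hwv,
      sub_self]
  · rw [map_sub, ← comp_apply (d₁ (i + 1) j), hd₁, LinearMap.zero_apply, sub_zero]

section Connecting

variable (hd₁ : ∀ i j, (d₁ (i + 1) j).comp (d₁ i j) = 0)
  (hcomm : ∀ i j, (d₂ (i + 1) j).comp (d₁ i j) = (d₁ i (j + 1)).comp (d₂ i j))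

variable (d₁ d₂ i j) in
noncomputable def d₂Class : lifts d₁ d₂ (i + 1) j →ₗ[R] homology d₁ d₂ i (j + 1) :=
  mkQ _ ∘ₗ (d₂ (i + 1) j).restrict fun _ hv => hv

variable (i j) in
noncomputable def d₁Class : lifts d₁ d₂ (i + 1) j →ₗ[R] homology d₁ d₂ (i + 1) j :=
  mkQ _ ∘ₗ (d₁ (i + 1) j).restrict fun _ hv => d₁_mem_cycles (hd₁ _ _) (hcomm _ _) hv.1

theorem d₂Class_surjective (hexact₂ : ker (d₂ (i + 1) (j + 1)) ≤ range (d₂ (i + 1) j)) :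
    Function.Surjective (d₂Class d₁ d₂ i j) := by
  rintro ⟨u, hu⟩
  obtain ⟨v, rfl⟩ := hexact₂ hu.2
  exact ⟨⟨v, hu⟩, rfl⟩

theorem ker_d₂Class_le (hexact₂ : ker (d₂ i (j + 1)) ≤ range (d₂ i j)) :
    ker (d₂Class d₁ d₂ i j) ≤ ker (d₁Class i j hd₁ hcomm) := by
  intro v hv
  simp only [mem_ker, d₂Class, d₁Class, coe_comp, Function.comp_apply, mkQ_apply,
    Quotient.mk_eq_zero, mem_comap, subtype_apply, coe_restrict_apply] at hv ⊢
  exact d₁_mem_boundaries (hd₁ _ _) (hcomm _ _) hexact₂ hv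

noncomputable def connecting (hexact₂ : ∀ i j, ker (d₂ i (j + 1)) ≤ range (d₂ i j)) :
    homology d₁ d₂ i (j + 1) →ₗ[R] homology d₁ d₂ (i + 1) j :=
  descOfSurjective (d₂Class d₁ d₂ i j) (d₂Class_surjective (hexact₂ _ _)) (d₁Class i j hd₁ hcomm)
    (ker_d₂Class_le hd₁ hcomm (hexact₂ _ _))

theorem connecting_mk (hexact₂ : ∀ i j, ker (d₂ i (j + 1)) ≤ range (d₂ i j))
    {u : X (i + 1) (j + 1)} (hu : u ∈ cycles d₁ d₂ (i + 1) (j + 1)) {v : X (i + 1) j}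
    (hv : d₂ (i + 1) j v = u) (hm : d₁ (i + 1) j v ∈ cycles d₁ d₂ (i + 1 + 1) j) :
    connecting hd₁ hcomm hexact₂ (Submodule.Quotient.mk ⟨u, hu⟩) =
      Submodule.Quotient.mk ⟨d₁ (i + 1) j v, hm⟩ := by
  subst hv
  exact descOfSurjective_apply _ _ _ _ (⟨v, hu⟩ : lifts d₁ d₂ (i + 1) j)

end Connecting

end Bicomplex

/-- Positions are shifted so that `(i, j) = (a + 1, b + 1)`. -/
theorem stmt3_general {R : Type*} [Ring R] (X : ℤ → ℤ → Type*)
    [∀ i j, AddCommGroup (X i j)] [∀ i j, Module R (X i j)]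
    (d₁ : ∀ i j, X i j →ₗ[R] X (i + 1) j)
    (d₂ : ∀ i j, X i j →ₗ[R] X i (j + 1))
    (hd₁ : ∀ i j, (d₁ (i + 1) j).comp (d₁ i j) = 0)
    (hcomm : ∀ i j, (d₂ (i + 1) j).comp (d₁ i j) = (d₁ i (j + 1)).comp (d₂ i j))
    (hexact₂ : ∀ i j, LinearMap.ker (d₂ i (j + 1)) = LinearMap.range (d₂ i j))
    (a b : ℤ)
    (x : X (a + 1) (b + 1))
    (hx : x ∈ LinearMap.ker (d₁ (a + 1) (b + 1)) ⊓ LinearMap.ker (d₂ (a + 1) (b + 1)))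
    (y : X (a + 1) b) (hy : d₂ (a + 1) b y = x) :
    -- (a)
    (d₁ (a + 1) b y ∈ LinearMap.ker (d₁ (a + 1 + 1) b) ⊓ LinearMap.ker (d₂ (a + 1 + 1) b)) ∧
    -- (b)
    (∀ x' : X (a + 1) (b + 1),
      x' ∈ LinearMap.ker (d₁ (a + 1) (b + 1)) ⊓ LinearMap.ker (d₂ (a + 1) (b + 1)) →
      x' - x ∈ Submodule.map (d₁ a (b + 1)) (LinearMap.ker (d₂ a (b + 1))) →
      ∀ y' : X (a + 1) b, d₂ (a + 1) b y' = x' →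
        d₁ (a + 1) b y' - d₁ (a + 1) b y ∈
          Submodule.map (d₁ (a + 1) b) (LinearMap.ker (d₂ (a + 1) b))) ∧
    -- hence: a well-defined `R`-linear map `H(X)^{(a+1,b+1)} → H(X)^{(a+2,b)}`
    (∃ φ :
      (↥(LinearMap.ker (d₁ (a + 1) (b + 1)) ⊓ LinearMap.ker (d₂ (a + 1) (b + 1))) ⧸
        Submodule.comap
          (LinearMap.ker (d₁ (a + 1) (b + 1)) ⊓ LinearMap.ker (d₂ (a + 1) (b + 1))).subtype
          (Submodule.map (d₁ a (b + 1)) (LinearMap.ker (d₂ a (b + 1))))) →ₗ[R]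
      (↥(LinearMap.ker (d₁ (a + 1 + 1) b) ⊓ LinearMap.ker (d₂ (a + 1 + 1) b)) ⧸
        Submodule.comap
          (LinearMap.ker (d₁ (a + 1 + 1) b) ⊓ LinearMap.ker (d₂ (a + 1 + 1) b)).subtype
          (Submodule.map (d₁ (a + 1) b) (LinearMap.ker (d₂ (a + 1) b)))),
      ∀ (u : X (a + 1) (b + 1))
        (hu : u ∈ LinearMap.ker (d₁ (a + 1) (b + 1)) ⊓ LinearMap.ker (d₂ (a + 1) (b + 1)))
        (v : X (a + 1) b) (_ : d₂ (a + 1) b v = u)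
        (hm : d₁ (a + 1) b v ∈ LinearMap.ker (d₁ (a + 1 + 1) b) ⊓ LinearMap.ker (d₂ (a + 1 + 1) b)),
        φ (Submodule.Quotient.mk ⟨u, hu⟩) =
          Submodule.Quotient.mk ⟨d₁ (a + 1) b v, hm⟩) := by
  have hexact₂' : ∀ i j, ker (d₂ i (j + 1)) ≤ range (d₂ i j) := fun i j => (hexact₂ i j).le
  refine ⟨Bicomplex.d₁_mem_cycles (hd₁ _ _) (hcomm _ _) (hy ▸ hx.1), ?_,
    Bicomplex.connecting hd₁ hcomm hexact₂', fun u hu v hv hm =>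
      Bicomplex.connecting_mk hd₁ hcomm hexact₂' hu hv hm⟩
  intro x' _ hx'x y' hy'
  rw [← map_sub]
  refine Bicomplex.d₁_mem_boundaries (hd₁ _ _) (hcomm _ _) (hexact₂' _ _) ?_
  rwa [map_sub, hy, hy']

/-- Let `X` be a bicomplex of `R`-modules with exact rows and
columns, and let `H(X)^{(i,j)} = (Z'(X)^{(i,j)} ⊓ Z''(X)^{(i,j)}) / d'(Z''(X)^{(i-1,j)})`.
Positions are shifted so that `(i, j) = (a+1, b+1)`.  Suppose
`x ∈ Z'(X)^{(a+1,b+1)} ⊓ Z''(X)^{(a+1,b+1)}` and `y ∈ X^{(a+1,b)}` satisfy `d''(y) = x`.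
Then (a) `d'(y) ∈ Z'(X)^{(a+2,b)} ⊓ Z''(X)^{(a+2,b)}`; (b) if
`x̄ ∈ Z'(X)^{(a+1,b+1)} ⊓ Z''(X)^{(a+1,b+1)}` with `x̄ - x ∈ d'(Z''(X)^{(a,b+1)})` and
`ȳ ∈ X^{(a+1,b)}` with `d''(ȳ) = x̄`, then `d'(ȳ) - d'(y) ∈ d'(Z''(X)^{(a+1,b)})`;
and hence the assignment `[x] ↦ [d'(y)]` gives a well-defined `R`-linear map
`H(X)^{(a+1,b+1)} → H(X)^{(a+2,b)}`. -/
theorem stmt3 {R : Type*} [Ring R] (X : ℤ → ℤ → Type*)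
    [∀ i j, AddCommGroup (X i j)] [∀ i j, Module R (X i j)]
    (d₁ : ∀ i j, X i j →ₗ[R] X (i + 1) j)
    (d₂ : ∀ i j, X i j →ₗ[R] X i (j + 1))
    (hd₁ : ∀ i j, (d₁ (i + 1) j).comp (d₁ i j) = 0)
    (hd₂ : ∀ i j, (d₂ i (j + 1)).comp (d₂ i j) = 0)
    (hcomm : ∀ i j, (d₂ (i + 1) j).comp (d₁ i j) = (d₁ i (j + 1)).comp (d₂ i j))
    (hexact₁ : ∀ i j, LinearMap.ker (d₁ (i + 1) j) = LinearMap.range (d₁ i j))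
    (hexact₂ : ∀ i j, LinearMap.ker (d₂ i (j + 1)) = LinearMap.range (d₂ i j))
    (a b : ℤ)
    (x : X (a + 1) (b + 1))
    (hx : x ∈ LinearMap.ker (d₁ (a + 1) (b + 1)) ⊓ LinearMap.ker (d₂ (a + 1) (b + 1)))
    (y : X (a + 1) b) (hy : d₂ (a + 1) b y = x) :
    -- (a)
    (d₁ (a + 1) b y ∈ LinearMap.ker (d₁ (a + 1 + 1) b) ⊓ LinearMap.ker (d₂ (a + 1 + 1) b)) ∧
    -- (b)
    (∀ x' : X (a + 1) (b + 1),
      x' ∈ LinearMap.ker (d₁ (a + 1) (b + 1)) ⊓ LinearMap.ker (d₂ (a + 1) (b + 1)) →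
      x' - x ∈ Submodule.map (d₁ a (b + 1)) (LinearMap.ker (d₂ a (b + 1))) →
      ∀ y' : X (a + 1) b, d₂ (a + 1) b y' = x' →
        d₁ (a + 1) b y' - d₁ (a + 1) b y ∈
          Submodule.map (d₁ (a + 1) b) (LinearMap.ker (d₂ (a + 1) b))) ∧
    -- hence: a well-defined `R`-linear map `H(X)^{(a+1,b+1)} → H(X)^{(a+2,b)}`
    (∃ φ :
      (↥(LinearMap.ker (d₁ (a + 1) (b + 1)) ⊓ LinearMap.ker (d₂ (a + 1) (b + 1))) ⧸
        Submodule.comap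
          (LinearMap.ker (d₁ (a + 1) (b + 1)) ⊓ LinearMap.ker (d₂ (a + 1) (b + 1))).subtype
          (Submodule.map (d₁ a (b + 1)) (LinearMap.ker (d₂ a (b + 1))))) →ₗ[R]
      (↥(LinearMap.ker (d₁ (a + 1 + 1) b) ⊓ LinearMap.ker (d₂ (a + 1 + 1) b)) ⧸
        Submodule.comap
          (LinearMap.ker (d₁ (a + 1 + 1) b) ⊓ LinearMap.ker (d₂ (a + 1 + 1) b)).subtype
          (Submodule.map (d₁ (a + 1) b) (LinearMap.ker (d₂ (a + 1) b)))),
      ∀ (u : X (a + 1) (b + 1))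
        (hu : u ∈ LinearMap.ker (d₁ (a + 1) (b + 1)) ⊓ LinearMap.ker (d₂ (a + 1) (b + 1)))
        (v : X (a + 1) b) (_ : d₂ (a + 1) b v = u)
        (hm : d₁ (a + 1) b v ∈ LinearMap.ker (d₁ (a + 1 + 1) b) ⊓ LinearMap.ker (d₂ (a + 1 + 1) b)),
        φ (Submodule.Quotient.mk ⟨u, hu⟩) =
          Submodule.Quotient.mk ⟨d₁ (a + 1) b v, hm⟩) :=
  stmt3_general X d₁ d₂ hd₁ hcomm hexact₂ a b x hx y hy
end

section
/- Let X be a bicomplex of R-modules with exact rows and columns (H'(X) = H''(X) = 0), and for each (i,j) let H(X)^{(i,j)} = (Z'(X)^{(i,j)} ∩ Z''(X)^{(i,j)}) / d'(Z''(X)^{(i-1,j)}). Then for every (i,j) there is an R-linear isomorphism H(X)^{(i,j)} → H(X)^{(i+1,j-1)} sending the class of x to the class of d'(y), for any y with d''(y) = x; its inverse H(X)^{(i+1,j-1)} → H(X)^{(i,j)} sends the class of z to the class of d''(w), for any w with d'(w) = z. (Second part of Theorem 2.1: a natural isomorphism H(X) → H(X) of bidegree (1,−1).) -/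
/-!
Both homology modules are quotients of `W = ker (d' ∘ d'') ⊆ X^{(i,j-1)}`: by exactness of the
columns, `d''` maps `W` onto `Z' ∩ Z''` at `(i,j)`, and by exactness of the rows (and
commutativity) `d'` maps `W` onto `Z' ∩ Z''` at `(i+1,j-1)`. Both induced maps to homology have
kernel `W ∩ (ker d' + ker d'')`; for `d''` this needs the denominator `d'(Z'')` rewritten as
`d''(Z')`, both being `d' d''(X^{(i-1,j-1)})`. Two surjections with equal kernels differ by a
unique isomorphism, which is the required one.
-/

open Submodule LinearMap

namespace LinearMap

variable {R M N₁ N₂ : Type*} [Ring R] [AddCommGroup M] [AddCommGroup N₁] [AddCommGroup N₂]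
  [Module R M] [Module R N₁] [Module R N₂]

noncomputable def equivOfKerEq (f : M →ₗ[R] N₁) (g : M →ₗ[R] N₂) (hf : Function.Surjective f)
    (hg : Function.Surjective g) (h : ker f = ker g) : N₁ ≃ₗ[R] N₂ :=
  (f.quotKerEquivOfSurjective hf).symm ≪≫ₗ quotEquivOfEq _ _ h ≪≫ₗ g.quotKerEquivOfSurjective hg

variable {f : M →ₗ[R] N₁} {g : M →ₗ[R] N₂} {hf : Function.Surjective f}
  {hg : Function.Surjective g} {h : ker f = ker g}

@[simp]
theorem equivOfKerEq_apply (x : M) : equivOfKerEq f g hf hg h (f x) = g x := by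
  simp [equivOfKerEq, quotEquivOfEq_mk]

@[simp]
theorem equivOfKerEq_symm_apply (x : M) : (equivOfKerEq f g hf hg h).symm (g x) = f x := by
  rw [LinearEquiv.symm_apply_eq, equivOfKerEq_apply]

def toSubquotient (f : M →ₗ[R] N₁) {W : Submodule R M} {Z : Submodule R N₁}
    (B : Submodule R N₁) (hWZ : W.map f ≤ Z) : W →ₗ[R] Z ⧸ B.comap Z.subtype :=
  (B.comap Z.subtype).mkQ ∘ₗ f.restrict fun _ hx ↦ hWZ (mem_map_of_mem hx)

variable {W : Submodule R M} {Z B : Submodule R N₁}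

theorem toSubquotient_surjective (hWZ : W.map f = Z) :
    Function.Surjective (f.toSubquotient B hWZ.le) := by
  refine (mkQ_surjective _).comp ?_
  rintro ⟨z, hz⟩
  obtain ⟨x, hx, rfl⟩ := mem_map.mp (hWZ ▸ hz)
  exact ⟨⟨x, hx⟩, rfl⟩

theorem ker_toSubquotient (hWZ : W.map f ≤ Z) :
    ker (f.toSubquotient B hWZ) = (B.comap f).comap W.subtype := by
  ext x
  simp [toSubquotient, Quotient.mk_eq_zero]

theorem map_ker_comp_eq_inf_ker {P Q : Type*} [AddCommGroup P] [AddCommGroup Q] [Module R P]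
    [Module R Q] {f : M →ₗ[R] N₁} {d : N₁ →ₗ[R] P} (g : N₁ →ₗ[R] Q) (h : ker d = range f) :
    (ker (g ∘ₗ f)).map f = ker g ⊓ ker d := by
  rw [ker_comp, map_comap_eq, ← h, inf_comm]

end LinearMap

theorem map_d₁_ker_d₂_eq_map_d₂_ker_d₁ {R : Type*} [Ring R] {X : ℤ → ℤ → Type*}
    [∀ i j, AddCommGroup (X i j)] [∀ i j, Module R (X i j)]
    {d₁ : ∀ i j, X i j →ₗ[R] X (i + 1) j} {d₂ : ∀ i j, X i j →ₗ[R] X i (j + 1)}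
    (hcomm : ∀ i j, (d₂ (i + 1) j).comp (d₁ i j) = (d₁ i (j + 1)).comp (d₂ i j))
    (hexact₁ : ∀ i j, ker (d₁ (i + 1) j) = range (d₁ i j))
    (hexact₂ : ∀ i j, ker (d₂ i (j + 1)) = range (d₂ i j)) (i j : ℤ) :
    (ker (d₂ i (j + 1))).map (d₁ i (j + 1)) = (ker (d₁ (i + 1) j)).map (d₂ (i + 1) j) := by
  rw [hexact₂, hexact₁, ← range_comp, ← range_comp, hcomm]

theorem stmt4_general {R : Type*} [Ring R] (X : ℤ → ℤ → Type*)
    [∀ i j, AddCommGroup (X i j)] [∀ i j, Module R (X i j)]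
    (d₁ : ∀ i j, X i j →ₗ[R] X (i + 1) j)
    (d₂ : ∀ i j, X i j →ₗ[R] X i (j + 1))
    (hcomm : ∀ i j, (d₂ (i + 1) j).comp (d₁ i j) = (d₁ i (j + 1)).comp (d₂ i j))
    (hexact₁ : ∀ i j, LinearMap.ker (d₁ (i + 1) j) = LinearMap.range (d₁ i j))
    (hexact₂ : ∀ i j, LinearMap.ker (d₂ i (j + 1)) = LinearMap.range (d₂ i j))
    (a b : ℤ) :
    ∃ e :
      (↥(LinearMap.ker (d₁ (a + 1) (b + 1)) ⊓ LinearMap.ker (d₂ (a + 1) (b + 1))) ⧸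
        Submodule.comap
          (LinearMap.ker (d₁ (a + 1) (b + 1)) ⊓ LinearMap.ker (d₂ (a + 1) (b + 1))).subtype
          (Submodule.map (d₁ a (b + 1)) (LinearMap.ker (d₂ a (b + 1))))) ≃ₗ[R]
      (↥(LinearMap.ker (d₁ (a + 1 + 1) b) ⊓ LinearMap.ker (d₂ (a + 1 + 1) b)) ⧸
        Submodule.comap
          (LinearMap.ker (d₁ (a + 1 + 1) b) ⊓ LinearMap.ker (d₂ (a + 1 + 1) b)).subtype
          (Submodule.map (d₁ (a + 1) b) (LinearMap.ker (d₂ (a + 1) b)))),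
      -- `e` sends the class of `x` to the class of `d'(y)` whenever `d''(y) = x`
      (∀ (x : X (a + 1) (b + 1))
        (hx : x ∈ LinearMap.ker (d₁ (a + 1) (b + 1)) ⊓ LinearMap.ker (d₂ (a + 1) (b + 1)))
        (y : X (a + 1) b) (_ : d₂ (a + 1) b y = x)
        (hm : d₁ (a + 1) b y ∈
          LinearMap.ker (d₁ (a + 1 + 1) b) ⊓ LinearMap.ker (d₂ (a + 1 + 1) b)),
        e (Submodule.Quotient.mk ⟨x, hx⟩) = Submodule.Quotient.mk ⟨d₁ (a + 1) b y, hm⟩) ∧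
      -- `e.symm` sends the class of `z` to the class of `d''(w)` whenever `d'(w) = z`
      (∀ (z : X (a + 1 + 1) b)
        (hz : z ∈ LinearMap.ker (d₁ (a + 1 + 1) b) ⊓ LinearMap.ker (d₂ (a + 1 + 1) b))
        (w : X (a + 1) b) (_ : d₁ (a + 1) b w = z)
        (hm : d₂ (a + 1) b w ∈
          LinearMap.ker (d₁ (a + 1) (b + 1)) ⊓ LinearMap.ker (d₂ (a + 1) (b + 1))),
        e.symm (Submodule.Quotient.mk ⟨z, hz⟩) =
          Submodule.Quotient.mk ⟨d₂ (a + 1) b w, hm⟩) := by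
  have hW₁ : (ker (d₁ (a + 1) (b + 1) ∘ₗ d₂ (a + 1) b)).map (d₂ (a + 1) b) =
      ker (d₁ (a + 1) (b + 1)) ⊓ ker (d₂ (a + 1) (b + 1)) :=
    map_ker_comp_eq_inf_ker _ (hexact₂ (a + 1) b)
  have hW₂ : (ker (d₁ (a + 1) (b + 1) ∘ₗ d₂ (a + 1) b)).map (d₁ (a + 1) b) =
      ker (d₁ (a + 1 + 1) b) ⊓ ker (d₂ (a + 1 + 1) b) := by
    rw [← hcomm, map_ker_comp_eq_inf_ker _ (hexact₁ (a + 1) b), inf_comm]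
  let φ₁ := (d₂ (a + 1) b).toSubquotient ((ker (d₂ a (b + 1))).map (d₁ a (b + 1))) hW₁.le
  let φ₂ := (d₁ (a + 1) b).toSubquotient ((ker (d₂ (a + 1) b)).map (d₁ (a + 1) b)) hW₂.le
  have hker : ker φ₁ = ker φ₂ := by
    rw [ker_toSubquotient, ker_toSubquotient, map_d₁_ker_d₂_eq_map_d₂_ker_d₁ hcomm hexact₁ hexact₂,
      comap_map_eq, comap_map_eq, sup_comm]
  refine ⟨equivOfKerEq φ₁ φ₂ (toSubquotient_surjective hW₁) (toSubquotient_surjective hW₂) hker,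
    ?_, ?_⟩
  · rintro x hx y rfl _
    exact equivOfKerEq_apply (f := φ₁) ⟨y, hx.1⟩
  · rintro z hz w rfl _
    have hw : d₁ (a + 1) (b + 1) (d₂ (a + 1) b w) = 0 := by
      rw [← LinearMap.comp_apply, ← hcomm]
      exact hz.2
    exact equivOfKerEq_symm_apply (g := φ₂) ⟨w, hw⟩

/-- second part of Theorem 2.1.  Let `X` be a bicomplex of
`R`-modules with exact rows and columns, and let
`H(X)^{(i,j)} = (Z'(X)^{(i,j)} ⊓ Z''(X)^{(i,j)}) / d'(Z''(X)^{(i-1,j)})`.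
Positions are shifted so that `(i, j) = (a+1, b+1)`.  Then there is an `R`-linear
isomorphism `H(X)^{(a+1,b+1)} → H(X)^{(a+2,b)}` sending the class of `x` to the
class of `d'(y)` for any `y` with `d''(y) = x`, whose inverse sends the class of
`z` to the class of `d''(w)` for any `w` with `d'(w) = z`. -/
theorem stmt4 {R : Type*} [Ring R] (X : ℤ → ℤ → Type*)
    [∀ i j, AddCommGroup (X i j)] [∀ i j, Module R (X i j)]
    (d₁ : ∀ i j, X i j →ₗ[R] X (i + 1) j)
    (d₂ : ∀ i j, X i j →ₗ[R] X i (j + 1))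
    (hd₁ : ∀ i j, (d₁ (i + 1) j).comp (d₁ i j) = 0)
    (hd₂ : ∀ i j, (d₂ i (j + 1)).comp (d₂ i j) = 0)
    (hcomm : ∀ i j, (d₂ (i + 1) j).comp (d₁ i j) = (d₁ i (j + 1)).comp (d₂ i j))
    (hexact₁ : ∀ i j, LinearMap.ker (d₁ (i + 1) j) = LinearMap.range (d₁ i j))
    (hexact₂ : ∀ i j, LinearMap.ker (d₂ i (j + 1)) = LinearMap.range (d₂ i j))
    (a b : ℤ) :
    ∃ e :
      (↥(LinearMap.ker (d₁ (a + 1) (b + 1)) ⊓ LinearMap.ker (d₂ (a + 1) (b + 1))) ⧸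
        Submodule.comap
          (LinearMap.ker (d₁ (a + 1) (b + 1)) ⊓ LinearMap.ker (d₂ (a + 1) (b + 1))).subtype
          (Submodule.map (d₁ a (b + 1)) (LinearMap.ker (d₂ a (b + 1))))) ≃ₗ[R]
      (↥(LinearMap.ker (d₁ (a + 1 + 1) b) ⊓ LinearMap.ker (d₂ (a + 1 + 1) b)) ⧸
        Submodule.comap
          (LinearMap.ker (d₁ (a + 1 + 1) b) ⊓ LinearMap.ker (d₂ (a + 1 + 1) b)).subtype
          (Submodule.map (d₁ (a + 1) b) (LinearMap.ker (d₂ (a + 1) b)))),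
      -- `e` sends the class of `x` to the class of `d'(y)` whenever `d''(y) = x`
      (∀ (x : X (a + 1) (b + 1))
        (hx : x ∈ LinearMap.ker (d₁ (a + 1) (b + 1)) ⊓ LinearMap.ker (d₂ (a + 1) (b + 1)))
        (y : X (a + 1) b) (_ : d₂ (a + 1) b y = x)
        (hm : d₁ (a + 1) b y ∈
          LinearMap.ker (d₁ (a + 1 + 1) b) ⊓ LinearMap.ker (d₂ (a + 1 + 1) b)),
        e (Submodule.Quotient.mk ⟨x, hx⟩) = Submodule.Quotient.mk ⟨d₁ (a + 1) b y, hm⟩) ∧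
      -- `e.symm` sends the class of `z` to the class of `d''(w)` whenever `d'(w) = z`
      (∀ (z : X (a + 1 + 1) b)
        (hz : z ∈ LinearMap.ker (d₁ (a + 1 + 1) b) ⊓ LinearMap.ker (d₂ (a + 1 + 1) b))
        (w : X (a + 1) b) (_ : d₁ (a + 1) b w = z)
        (hm : d₂ (a + 1) b w ∈
          LinearMap.ker (d₁ (a + 1) (b + 1)) ⊓ LinearMap.ker (d₂ (a + 1) (b + 1))),
        e.symm (Submodule.Quotient.mk ⟨z, hz⟩) =
          Submodule.Quotient.mk ⟨d₂ (a + 1) b w, hm⟩) :=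
  stmt4_general X d₁ d₂ hcomm hexact₁ hexact₂ a b
end

section
/- Tate homology balance: Let C be an exact ℤ-indexed chain complex of flat right R-modules and D an exact ℤ-indexed chain complex of flat left R-modules. Then for every n ∈ ℤ there is an isomorphism H_n(Z_0(C) ⊗ D) ≅ H_n(C ⊗ Z_0(D)). -/
/-!
Put `B_i C = range (dC i) ⊆ C_i` and `B_j D = range (dD j) ⊆ D_j`; exactness gives short exact
sequences `0 → B_{i+1} C → C_{i+1} → B_i C → 0` and `Z₀ = B₀`. Right exactness of `⊗` identifies
`H_{n+1}(Z₀(C) ⊗ D)` with `T(0, n)` and `H_{n+1}(C ⊗ Z₀(D))` with `T(n, 0)`, where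
`T(i, j) = ker (B_i C ⊗ B_j D → B_i C ⊗ D_j)`. For flat `C` and `D`, the usual balancing of
`Tor₁(B_i C, B_j D)` gives `T(i + 1, j) ≅ T(i, j + 1)`: both are isomorphic to the subquotient
`(im (B_{i+1} C ⊗ D_{j+1}) ∩ im (C_i ⊗ B_{j+1} D)) / im (B_{i+1} C ⊗ B_{j+1} D)`
of `C_i ⊗ D_{j+1}`. Moving along the antidiagonal `i + j = n` gives `T(0, n) ≅ T(n, 0)`.
-/

open LinearMap TensorProduct Function

namespace Submodule

variable {R M N : Type*} [Ring R] [AddCommGroup M] [Module R M] [AddCommGroup N] [Module R N]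

noncomputable def subquotientEquivOfSurjective (f : M →ₗ[R] N) (hf : Surjective f)
    (S : Submodule R N) {K L : Submodule R M} (hK : K = S.comap f) (hL : L = ker f) :
    (↥K ⧸ L.comap K.subtype) ≃ₗ[R] S := by
  subst hK hL
  let g : S.comap f →ₗ[R] S := f.restrict fun _ hx => hx
  have hg : Surjective g := by
    rintro ⟨y, hy⟩
    obtain ⟨x, rfl⟩ := hf y
    exact ⟨⟨x, hy⟩, rfl⟩
  have hker : (ker f).comap (S.comap f).subtype = ker g := by
    ext x
    simp [g, Subtype.ext_iff]
  exact (quotEquivOfEq _ _ hker).trans (g.quotKerEquivOfSurjective hg)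

noncomputable def subquotientEquivMapOfInjective (f : M →ₗ[R] N) (hf : Injective f)
    (K S : Submodule R M) {K' S' : Submodule R N} (hK : K.map f = K') (hS : S.map f = S') :
    (↥K ⧸ S.comap K.subtype) ≃ₗ[R] (↥K' ⧸ S'.comap K'.subtype) := by
  subst hK hS
  refine Quotient.equiv _ _ (K.equivMapOfInjective f hf) ?_
  ext ⟨y, x, hxK, rfl⟩
  have hx : (K.equivMapOfInjective f hf).symm ⟨f x, x, hxK, rfl⟩ = ⟨x, hxK⟩ :=
    (LinearEquiv.symm_apply_eq _).mpr rfl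
  simp [hf.eq_iff, hx]

end Submodule

namespace LinearMap

section Ring

variable {R P P'' X X'' : Type*} [Ring R] [AddCommGroup P] [Module R P]
  [AddCommGroup P''] [Module R P''] [AddCommGroup X] [Module R X] [AddCommGroup X''] [Module R X'']

noncomputable def kerEquivSubquotientOfCommSq (α : P →ₗ[R] X) (q : P →ₗ[R] P'')
    (ι : P'' →ₗ[R] X'') (p : X →ₗ[R] X'') (hα : Injective α) (hq : Surjective q)
    (h : p ∘ₗ α = ι ∘ₗ q) :
    ker ι ≃ₗ[R]
      (↥(range α ⊓ ker p) ⧸ ((ker q).map α).comap (range α ⊓ ker p).subtype) :=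
  (Submodule.subquotientEquivOfSurjective q hq (ker ι)
    (by rw [← ker_comp, h, ker_comp]) rfl).symm.trans
  (Submodule.subquotientEquivMapOfInjective α hα _ _ (Submodule.map_comap_eq α _) rfl)

noncomputable def homologyOfEquivKerOfExact {M : Type*} [AddCommGroup M] [Module R M]
    (f : M →ₗ[R] P) (φ : P →ₗ[R] P'') (ι : P'' →ₗ[R] X'') (g : P →ₗ[R] X'')
    (hφ : Surjective φ) (hfφ : Exact f φ) (hg : ι ∘ₗ φ = g) :
    homologyOf f g ≃ₗ[R] ker ι :=
  Submodule.subquotientEquivOfSurjective φ hφ (ker ι) (by rw [← hg, ker_comp])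
    hfφ.linearMap_ker_eq.symm

end Ring

section Tensor

variable {R : Type*} [CommRing R]

section

variable (M : Type*) [AddCommGroup M] [Module R M] {X Y Z : Type*}
  [AddCommGroup X] [Module R X] [AddCommGroup Y] [Module R Y] [AddCommGroup Z] [Module R Z]
  {d₂ : X →ₗ[R] Y} {d₁ : Y →ₗ[R] Z}

theorem exact_rangeRestrict_of_ker_eq_range (hex : ker d₁ = range d₂) :
    Exact d₂ d₁.rangeRestrict :=
  exact_iff.mpr (by rw [ker_rangeRestrict, hex])

noncomputable def homologyOfLTensorEquivKer (hex : ker d₁ = range d₂) :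
    homologyOf (lTensor M d₂) (lTensor M d₁) ≃ₗ[R] ker (lTensor M (range d₁).subtype) :=
  homologyOfEquivKerOfExact _ _ _ _ (lTensor_surjective M d₁.surjective_rangeRestrict)
    (lTensor_exact M (exact_rangeRestrict_of_ker_eq_range hex) d₁.surjective_rangeRestrict)
    (by rw [← lTensor_comp, subtype_comp_codRestrict])

noncomputable def homologyOfRTensorEquivKer (hex : ker d₁ = range d₂) :
    homologyOf (rTensor M d₂) (rTensor M d₁) ≃ₗ[R] ker (rTensor M (range d₁).subtype) :=
  homologyOfEquivKerOfExact _ _ _ _ (rTensor_surjective M d₁.surjective_rangeRestrict)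
    (rTensor_exact M (exact_rangeRestrict_of_ker_eq_range hex) d₁.surjective_rangeRestrict)
    (by rw [← rTensor_comp, subtype_comp_codRestrict])

end

variable {M X N Y : Type*} [AddCommGroup M] [Module R M] [AddCommGroup X] [Module R X]
  [AddCommGroup N] [Module R N] [AddCommGroup Y] [Module R Y]

theorem ker_map_eq_ker_rTensor [Module.Flat R X] (i : M →ₗ[R] X) {j : N →ₗ[R] Y}
    (hj : Injective j) : ker (TensorProduct.map i j) = ker (rTensor N i) := by
  rw [← lTensor_comp_rTensor, ker_comp,
    ker_eq_bot.mpr (Module.Flat.lTensor_preserves_injective_linearMap j hj), Submodule.comap_bot]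

theorem ker_map_eq_ker_lTensor [Module.Flat R Y] {i : M →ₗ[R] X} (hi : Injective i)
    (j : N →ₗ[R] Y) : ker (TensorProduct.map i j) = ker (lTensor M j) := by
  rw [← rTensor_comp_lTensor, ker_comp,
    ker_eq_bot.mpr (Module.Flat.rTensor_preserves_injective_linearMap i hi), Submodule.comap_bot]

theorem ker_rTensor_eq_ker_lTensor [Module.Flat R X] [Module.Flat R Y] {i : M →ₗ[R] X}
    {j : N →ₗ[R] Y} (hi : Injective i) (hj : Injective j) :
    ker (rTensor N i) = ker (lTensor M j) :=
  (ker_map_eq_ker_rTensor i hj).symm.trans (ker_map_eq_ker_lTensor hi j)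

end Tensor

end LinearMap

section Balance

variable {R : Type*} [CommRing R] {A' A A'' B' B B'' : Type*}
  [AddCommGroup A'] [Module R A'] [AddCommGroup A] [Module R A] [Module.Flat R A]
  [AddCommGroup A''] [Module R A''] [AddCommGroup B'] [Module R B']
  [AddCommGroup B] [Module R B] [Module.Flat R B] [AddCommGroup B''] [Module R B'']

theorem nonempty_ker_rTensor_equiv_ker_lTensor {iA : A' →ₗ[R] A} {pA : A →ₗ[R] A''}
    {iB : B' →ₗ[R] B} {pB : B →ₗ[R] B''} (hiA : Injective iA) (hpA : Surjective pA)
    (hA : Exact iA pA) (hiB : Injective iB) (hpB : Surjective pB) (hB : Exact iB pB) :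
    Nonempty (ker (rTensor B'' iA) ≃ₗ[R] ker (lTensor A'' iB)) := by
  have eA := kerEquivSubquotientOfCommSq (rTensor B iA) (lTensor A' pB) (rTensor B'' iA)
    (lTensor A pB) (Module.Flat.rTensor_preserves_injective_linearMap iA hiA)
    (lTensor_surjective A' hpB) (by rw [lTensor_comp_rTensor, rTensor_comp_lTensor])
  have eB := kerEquivSubquotientOfCommSq (lTensor A iB) (rTensor B' pA) (lTensor A'' iB)
    (rTensor B pA) (Module.Flat.lTensor_preserves_injective_linearMap iB hiB)
    (rTensor_surjective B' hpA) (by rw [rTensor_comp_lTensor, lTensor_comp_rTensor])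
  have hK : range (rTensor B iA) ⊓ ker (lTensor A pB)
      = range (lTensor A iB) ⊓ ker (rTensor B pA) := by
    rw [(lTensor_exact A hB hpB).linearMap_ker_eq, (rTensor_exact B hA hpA).linearMap_ker_eq,
      inf_comm]
  have hS : (ker (lTensor A' pB)).map (rTensor B iA)
      = (ker (rTensor B' pA)).map (lTensor A iB) := by
    rw [(lTensor_exact A' hB hpB).linearMap_ker_eq, (rTensor_exact B' hA hpA).linearMap_ker_eq,
      ← range_comp, ← range_comp, rTensor_comp_lTensor, lTensor_comp_rTensor]
  rw [hK, hS] at eA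
  exact ⟨eA.trans eB.symm⟩

end Balance

theorem nonempty_ker_lTensor_range_equiv {R : Type*} [CommRing R] {C' C C'' D' D D'' : Type*}
    [AddCommGroup C'] [Module R C'] [AddCommGroup C] [Module R C] [Module.Flat R C]
    [AddCommGroup C''] [Module R C''] [AddCommGroup D'] [Module R D']
    [AddCommGroup D] [Module R D] [Module.Flat R D] [AddCommGroup D''] [Module R D'']
    [Module.Flat R D''] {dC' : C' →ₗ[R] C} {dC : C →ₗ[R] C''} {dD' : D' →ₗ[R] D}
    {dD : D →ₗ[R] D''} (hC : ker dC = range dC') (hD : ker dD = range dD') :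
    Nonempty (ker (lTensor (range dC') (range dD).subtype) ≃ₗ[R]
      ker (lTensor (range dC) (range dD').subtype)) := by
  rw [← ker_rTensor_eq_ker_lTensor (range dC').injective_subtype (range dD).injective_subtype]
  refine nonempty_ker_rTensor_equiv_ker_lTensor (range dC').injective_subtype
    dC.surjective_rangeRestrict ?_ (range dD').injective_subtype dD.surjective_rangeRestrict ?_
  · rw [exact_iff, ker_rangeRestrict, hC, Submodule.range_subtype]
  · rw [exact_iff, ker_rangeRestrict, hD, Submodule.range_subtype]

theorem Equivalence.of_add_eq_add {r : ℤ × ℤ → ℤ × ℤ → Prop} (hr : Equivalence r)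
    (step : ∀ i j, r (i + 1, j) (i, j + 1)) {a b : ℤ × ℤ} (h : a.1 + a.2 = b.1 + b.2) :
    r a b := by
  have shift : ∀ (k : ℕ) (i j : ℤ), r (i + k, j) (i, j + k) := by
    intro k
    induction k with
    | zero => simpa using fun i j => hr.refl (i, j)
    | succ k ih =>
      intro i j
      have h₁ := step (i + k) j
      have h₂ := ih i (j + 1)
      rw [show i + ↑(k + 1) = i + k + 1 by push_cast; ring,
        show j + ↑(k + 1) = j + 1 + k by push_cast; ring]
      exact hr.trans h₁ h₂
  obtain ⟨a₁, a₂⟩ := a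
  obtain ⟨b₁, b₂⟩ := b
  rcases le_total b₁ a₁ with hab | hba
  · have := shift (a₁ - b₁).toNat b₁ a₂
    rwa [Int.toNat_of_nonneg (by omega), show b₁ + (a₁ - b₁) = a₁ by ring,
      show a₂ + (a₁ - b₁) = b₂ by simp only at h; omega] at this
  · have := shift (b₁ - a₁).toNat a₁ b₂
    rw [Int.toNat_of_nonneg (by omega), show a₁ + (b₁ - a₁) = b₁ by ring,
      show b₂ + (b₁ - a₁) = a₂ by simp only at h; omega] at this
    exact hr.symm this

theorem stmt13_general {R : Type*} [CommRing R]
    (C : ℤ → Type*) [∀ i, AddCommGroup (C i)] [∀ i, Module R (C i)]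
    [∀ i, Module.Flat R (C i)]
    (dC : ∀ i, C (i + 1) →ₗ[R] C i)
    (hCex : ∀ i, LinearMap.ker (dC i) = LinearMap.range (dC (i + 1)))
    (D : ℤ → Type*) [∀ j, AddCommGroup (D j)] [∀ j, Module R (D j)]
    [∀ j, Module.Flat R (D j)]
    (dD : ∀ j, D (j + 1) →ₗ[R] D j)
    (hDex : ∀ j, LinearMap.ker (dD j) = LinearMap.range (dD (j + 1))) :
    ∀ n : ℤ,
      Nonempty
        (homologyOf (LinearMap.lTensor (↥(LinearMap.ker (dC (-1)))) (dD (n + 1)))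
            (LinearMap.lTensor (↥(LinearMap.ker (dC (-1)))) (dD n)) ≃ₗ[R]
          homologyOf (LinearMap.rTensor (↥(LinearMap.ker (dD (-1)))) (dC (n + 1)))
            (LinearMap.rTensor (↥(LinearMap.ker (dD (-1)))) (dC n))) := by
  intro n
  let T : ℤ × ℤ → Type _ := fun ij ↦
    ker (lTensor (range (dC ij.1)) (range (dD ij.2)).subtype)
  have balance : Nonempty (T (-1 + 1, n) ≃ₗ[R] T (n, -1 + 1)) := by
    refine Equivalence.of_add_eq_add (r := fun a b ↦ Nonempty (T a ≃ₗ[R] T b))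
      ⟨fun _ ↦ ⟨.refl R _⟩, fun ⟨e⟩ ↦ ⟨e.symm⟩, fun ⟨e⟩ ⟨e'⟩ ↦ ⟨e.trans e'⟩⟩
      (fun i j ↦ nonempty_ker_lTensor_range_equiv (hCex i) (hDex j)) (by simp only; ring)
  obtain ⟨e⟩ := balance
  rw [hCex (-1), hDex (-1)]
  exact ⟨(homologyOfLTensorEquivKer _ (hDex n)).trans <| e.trans <|
    (LinearEquiv.ofEq _ _ (ker_rTensor_eq_ker_lTensor (range (dC n)).injective_subtype
      (range (dD _)).injective_subtype)).symm.trans (homologyOfRTensorEquivKer _ (hCex n)).symm⟩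

/-- balance of Tate homology.  Let `C` and `D` be exact chain
complexes of flat `R`-modules (differentials `dC i : C (i+1) → C i`,
`dD j : D (j+1) → D j`; over a commutative ring right and left modules coincide).
Then for every `n`, `H_{n+1}(Z₀(C) ⊗ D) ≅ H_{n+1}(C ⊗ Z₀(D))` (as `n` ranges
over `ℤ` this covers every degree), where `Z₀(C) = ker (dC (-1))`,
`Z₀(D) = ker (dD (-1))`, the complex `Z₀(C) ⊗ D` has differentials
`id ⊗ dD = lTensor` and the complex `C ⊗ Z₀(D)` has differentials
`dC ⊗ id = rTensor`. -/
theorem stmt13 {R : Type*} [CommRing R]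
    (C : ℤ → Type*) [∀ i, AddCommGroup (C i)] [∀ i, Module R (C i)]
    [∀ i, Module.Flat R (C i)]
    (dC : ∀ i, C (i + 1) →ₗ[R] C i)
    (hdC : ∀ i, (dC i).comp (dC (i + 1)) = 0)
    (hCex : ∀ i, LinearMap.ker (dC i) = LinearMap.range (dC (i + 1)))
    (D : ℤ → Type*) [∀ j, AddCommGroup (D j)] [∀ j, Module R (D j)]
    [∀ j, Module.Flat R (D j)]
    (dD : ∀ j, D (j + 1) →ₗ[R] D j)
    (hdD : ∀ j, (dD j).comp (dD (j + 1)) = 0)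
    (hDex : ∀ j, LinearMap.ker (dD j) = LinearMap.range (dD (j + 1))) :
    ∀ n : ℤ,
      Nonempty
        (homologyOf (LinearMap.lTensor (↥(LinearMap.ker (dC (-1)))) (dD (n + 1)))
            (LinearMap.lTensor (↥(LinearMap.ker (dC (-1)))) (dD n)) ≃ₗ[R]
          homologyOf (LinearMap.rTensor (↥(LinearMap.ker (dD (-1)))) (dC (n + 1)))
            (LinearMap.rTensor (↥(LinearMap.ker (dD (-1)))) (dC n))) :=
  stmt13_general C dC hCex D dD hDex
end
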